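/- arXiv:2009.05293 — 2 statements merged into one kernel-verified Lean document; each statement's English description precedes it below -/
import Mathlib

section
/- Let α ∈ (0,1), q = 1/(1−α), and let 1 = r_0 ≥ r_1 ≥ … ≥ r_N > 0 be a nonincreasing sequence. Then for every n ≤ N, the partial sum ∑_{k=1}^{n} r_k^α (1/r_k − 1/r_{k−1}) is at most (1 − r_n^{α−1})/(α−1) + 1, and hence at most C · r_n^{α−1} with C = 1/(1−α) + 1. -/
/-!
Substituting `x = 1 / r`, the term `r_k ^ α * (1 / r_k - 1 / r_{k-1})` is a right-endpoint Riemann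
sum of the nonincreasing function `x ↦ x ^ (-α)` over `[1 / r_{k-1}, 1 / r_k]`, hence is bounded by
its integral `(r_k ^ (α - 1) - r_{k-1} ^ (α - 1)) / (1 - α)`; this local bound is Bernoulli's
inequality for the exponent `1 - α ∈ (0, 1]`. The bounds then telescope.
-/

open Real Finset

theorem rpow_mul_one_div_sub_one_div_le {α a b : ℝ} (hα0 : 0 ≤ α) (hα1 : α < 1)
    (ha : 0 < a) (hab : a ≤ b) :
    a ^ α * (1 / a - 1 / b) ≤ (a ^ (α - 1) - b ^ (α - 1)) / (1 - α) := by
  have hb : 0 < b := ha.trans_le hab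
  set t := a / b with ht
  have hbernoulli : t ^ (1 - α) ≤ 1 + (1 - α) * (t - 1) := by
    simpa using rpow_one_add_le_one_add_mul_self (s := t - 1)
      (by linarith [div_pos ha hb]) (by linarith) (by linarith)
  have hb_eq : b ^ (α - 1) = a ^ (α - 1) * t ^ (1 - α) := by
    rw [div_rpow ha.le hb.le, mul_div_assoc', ← rpow_add ha, eq_div_iff (rpow_pos_of_pos hb _).ne',
      ← rpow_add hb]
    norm_num
  have hlhs_eq : a ^ α * (1 / a - 1 / b) = a ^ (α - 1) * (1 - t) := by
    rw [rpow_sub_one ha.ne', ht]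
    field_simp
  rw [hb_eq, hlhs_eq, le_div_iff₀ (by linarith)]
  nlinarith [mul_le_mul_of_nonneg_left hbernoulli (rpow_pos_of_pos ha (α - 1)).le]

theorem sum_rpow_mul_one_div_sub_one_div_le {α : ℝ} (hα0 : 0 ≤ α) (hα1 : α < 1) {r : ℕ → ℝ}
    {n : ℕ} (hpos : ∀ k, k ≤ n → 0 < r k) (hmono : ∀ k, 1 ≤ k → k ≤ n → r k ≤ r (k - 1)) :
    ∑ k ∈ Icc 1 n, r k ^ α * (1 / r k - 1 / r (k - 1))
      ≤ (r n ^ (α - 1) - r 0 ^ (α - 1)) / (1 - α) := by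
  induction n with
  | zero => simp
  | succ n ih =>
    rw [sum_Icc_succ_top (by omega), sub_div]
    have hstep := rpow_mul_one_div_sub_one_div_le hα0 hα1 (hpos _ le_rfl)
      (hmono (n + 1) (by omega) le_rfl)
    have hprev := ih (fun k hk => hpos k (by omega)) (fun k hk hkn => hmono k hk (by omega))
    simp only [add_tsub_cancel_right, sub_div] at hstep hprev ⊢
    linarith

theorem stmt_6_general (α : ℝ) (hα : 0 < α) (hα1 : α < 1)
    (N : ℕ) (r : ℕ → ℝ) (hr0 : r 0 = 1)
    (hpos : ∀ k, k ≤ N → 0 < r k)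
    (hmono : ∀ k, 1 ≤ k → k ≤ N → r k ≤ r (k - 1))
    (n : ℕ) (hn : n ≤ N) :
    (∑ k ∈ Finset.Icc 1 n, r k ^ α * (1 / r k - 1 / r (k - 1)))
        ≤ (1 - r n ^ (α - 1)) / (α - 1) + 1 ∧
      (∑ k ∈ Finset.Icc 1 n, r k ^ α * (1 / r k - 1 / r (k - 1)))
        ≤ (1 / (1 - α) + 1) * r n ^ (α - 1) := by
  have hsum := sum_rpow_mul_one_div_sub_one_div_le hα.le hα1 (n := n)
    (fun k hk => hpos k (hk.trans hn)) (fun k hk hkn => hmono k hk (hkn.trans hn))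
  rw [hr0, one_rpow] at hsum
  have hsign : (1 - r n ^ (α - 1)) / (α - 1) = (r n ^ (α - 1) - 1) / (1 - α) := by
    rw [← neg_div_neg_eq, neg_sub, neg_sub]
  have hR : 0 < r n ^ (α - 1) := rpow_pos_of_pos (hpos n hn) _
  refine ⟨by linarith, hsum.trans ?_⟩
  calc (r n ^ (α - 1) - 1) / (1 - α) ≤ r n ^ (α - 1) / (1 - α) := by gcongr; linarith
    _ ≤ (1 / (1 - α) + 1) * r n ^ (α - 1) := by rw [add_mul, one_div_mul_eq_div]; linarith

theorem stmt_6 (α q : ℝ) (hα : 0 < α) (hα1 : α < 1) (hq : q = 1 / (1 - α))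
    (N : ℕ) (r : ℕ → ℝ) (hr0 : r 0 = 1)
    (hpos : ∀ k, k ≤ N → 0 < r k)
    (hmono : ∀ k, 1 ≤ k → k ≤ N → r k ≤ r (k - 1))
    (n : ℕ) (hn : n ≤ N) :
    (∑ k ∈ Finset.Icc 1 n, r k ^ α * (1 / r k - 1 / r (k - 1)))
        ≤ (1 - r n ^ (α - 1)) / (α - 1) + 1 ∧
      (∑ k ∈ Finset.Icc 1 n, r k ^ α * (1 / r k - 1 / r (k - 1)))
        ≤ (1 / (1 - α) + 1) * r n ^ (α - 1) :=
  stmt_6_general α hα hα1 N r hr0 hpos hmono n hn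
end

section
/- Let α ∈ (0,1) and (P_n)_{n≥N} a positive nonincreasing sequence with P_N = r and P_n → 0. Suppose (a_n)_{n>N} are reals satisfying P_n^α − P_{n−1}^α ≤ a_n ≤ P_n^α (1 − P_n/P_{n−1}) for all n > N, and the series ∑_{n>N} a_n converges. Then −r^α ≤ ∑_{n>N} a_n ≤ r^α/α. -/
/-!
Write `u_n = P_n ^ α`, a nonincreasing sequence tending to `0`. The lower bound on `a_n` is the
increment `u_n - u_{n-1}`, which telescopes to `-r ^ α`. For the upper bound, Bernoulli's
inequality `t ^ α ≤ 1 + α (t - 1)` at `t = P_n / P_{n-1}` gives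
`P_n ^ α (1 - P_n / P_{n-1}) ≤ (u_{n-1} - u_n) / α`, which telescopes to `r ^ α / α`.
-/

open Filter Topology

lemma rpow_mul_one_sub_div_le {α x y : ℝ} (hα : 0 < α) (hα1 : α ≤ 1) (hy : 0 < y)
    (hyx : y ≤ x) : y ^ α * (1 - y / x) ≤ (x ^ α - y ^ α) / α := by
  have hx : 0 < x := hy.trans_le hyx
  have hbern : (y / x) ^ α ≤ 1 + α * (y / x - 1) := by
    simpa using rpow_one_add_le_one_add_mul_self (s := y / x - 1) (by linarith [div_pos hy hx])
      hα.le hα1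
  have hconcave : α * (x ^ α * (1 - y / x)) ≤ x ^ α - y ^ α := by
    rw [Real.div_rpow hy.le hx.le, div_le_iff₀ (by positivity)] at hbern
    linarith
  have hmono : y ^ α * (1 - y / x) ≤ x ^ α * (1 - y / x) :=
    mul_le_mul_of_nonneg_right (Real.rpow_le_rpow hy.le hyx hα.le)
      (sub_nonneg.2 ((div_le_one hx).2 hyx))
  rw [le_div_iff₀ hα]
  nlinarith

section Telescoping

variable {u b : ℕ → ℝ} {L S : ℝ}

lemma sub_le_of_hasSum_of_sub_le (hu : Tendsto u atTop (𝓝 L)) (hb : HasSum b S)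
    (h : ∀ i, u (i + 1) - u i ≤ b i) : L - u 0 ≤ S :=
  le_of_tendsto_of_tendsto' (hu.sub_const (u 0)) hb.tendsto_sum_nat fun m => by
    rw [← Finset.sum_range_sub]
    exact Finset.sum_le_sum fun i _ => h i

lemma le_sub_of_hasSum_of_le_sub (hu : Tendsto u atTop (𝓝 L)) (hb : HasSum b S)
    (h : ∀ i, b i ≤ u i - u (i + 1)) : S ≤ u 0 - L :=
  le_of_tendsto_of_tendsto' hb.tendsto_sum_nat (tendsto_const_nhds.sub hu) fun m => by
    rw [← Finset.sum_range_sub']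
    exact Finset.sum_le_sum fun i _ => h i

end Telescoping

theorem stmt_14 (α r : ℝ) (hα : 0 < α) (hα1 : α < 1) (N : ℕ) (P : ℕ → ℝ)
    (hpos : ∀ n, N ≤ n → 0 < P n)
    (hmono : ∀ n, N ≤ n → P (n + 1) ≤ P n)
    (hPN : P N = r)
    (hlim : Filter.Tendsto P Filter.atTop (nhds 0))
    (a : ℕ → ℝ)
    (hlow : ∀ n, N ≤ n → P (n + 1) ^ α - P n ^ α ≤ a (n + 1))
    (hhigh : ∀ n, N ≤ n → a (n + 1) ≤ P (n + 1) ^ α * (1 - P (n + 1) / P n))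
    (S : ℝ) (hS : HasSum (fun n : ℕ => a (N + 1 + n)) S) :
    -r ^ α ≤ S ∧ S ≤ r ^ α / α := by
  have hshift : Tendsto (fun i => P (N + i)) atTop (𝓝 0) := by
    simpa only [add_comm N] using (tendsto_add_atTop_iff_nat N).2 hlim
  have hu : Tendsto (fun i => P (N + i) ^ α) atTop (𝓝 0) := hshift.rpow_const_nhds_zero hα
  have hidx : ∀ i, N + 1 + i = N + i + 1 := fun i => by omega
  constructor
  · have := sub_le_of_hasSum_of_sub_le hu hS fun i => by
      simpa only [hidx, ← add_assoc] using hlow (N + i) (by omega)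
    simpa [hPN] using this
  · have := le_sub_of_hasSum_of_le_sub (hu.div_const α) hS fun i => by
      rw [hidx, ← add_assoc, ← sub_div]
      exact (hhigh (N + i) (by omega)).trans
        (rpow_mul_one_sub_div_le hα hα1.le (hpos _ (by omega)) (hmono _ (by omega)))
    simpa [hPN] using this
end
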